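/- arXiv:1806.00564 — 2 statements merged into one kernel-verified Lean document; each statement's English description precedes it below -/
import Mathlib

section
/- Let d ≥ 1 be an integer, let θ > 0, and let τ : ℝ^d → ℝ be a smooth function whose support is contained in an annulus {ξ ∈ ℝ^d : a ≤ |ξ| ≤ b} for some 0 < a < b. For j ∈ ℕ define F_j(x) = ∫_{ℝ^d} τ(2^{−j}ξ) |ξ|^{−θ} (exp(−|2πξ|^θ) − 1) exp(−2π√−1 x·ξ) dξ. Then there exists a constant C, depending only on d, θ and τ, such that for all j ∈ ℕ and all x ∈ ℝ^d one has |F_j(x)| ≤ C · 2^{j(d−θ)} / (1 + (2^j|x|)^{d+1}); in particular there is a constant C′, depending only on d, θ and τ, with ∫_{ℝ^d} |F_j(x)| dx ≤ C′ · 2^{−jθ} for every j ∈ ℕ. -/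
open MeasureTheory Real Function

noncomputable section

section auxsection
open Set Filter Topology FourierTransform
-- from t1.lean


/-- finite max helper -/
lemma aux_exists_bound (f : ℕ → ℝ) (n : ℕ) : ∃ C : ℝ, 0 ≤ C ∧ ∀ i ≤ n, f i ≤ C := by
  induction n with
  | zero => exact ⟨max (f 0) 0, le_max_right _ _, fun i hi => by
      interval_cases i; exact le_max_left _ _⟩
  | succ n ih =>
    obtain ⟨C, hC0, hC⟩ := ih
    refine ⟨max C (f (n+1)), le_trans hC0 (le_max_left _ _), fun i hi => ?_⟩
    rcases Nat.lt_succ_iff_lt_or_eq.1 (Nat.lt_succ_of_le hi) with h | h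
    · exact le_trans (hC i (Nat.lt_succ_iff.1 h)) (le_max_left _ _)
    · subst h; exact le_max_right _ _

/-- iterated derivative of rpow on `Ioi 0` -/
lemma aux_rpow_iter (p : ℝ) : ∀ (n : ℕ) (t : ℝ), 0 < t →
    iteratedDerivWithin n (fun s : ℝ => s ^ p) (Set.Ioi 0) t
      = (∏ k ∈ Finset.range n, (p - k)) * t ^ (p - n) := by
  intro n
  induction n with
  | zero => intro t ht; simp
  | succ n ih =>
    intro t ht
    rw [iteratedDerivWithin_succ]
    have h1 : derivWithin (iteratedDerivWithin n (fun s : ℝ => s ^ p) (Set.Ioi 0)) (Set.Ioi 0) t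
        = derivWithin (fun s : ℝ => (∏ k ∈ Finset.range n, (p - k)) * s ^ (p - n)) (Set.Ioi 0) t := by
      apply derivWithin_congr
      · intro s hs; exact ih s hs
      · exact ih t ht
    rw [h1, derivWithin_of_isOpen isOpen_Ioi ht]
    rw [deriv_const_mul _ (Real.differentiableAt_rpow_const_of_ne _ (ne_of_gt ht))]
    rw [Real.deriv_rpow_const t (p - n)]
    rw [Finset.prod_range_succ]
    push_cast
    rw [show p - ((n:ℝ) + 1) = p - (n:ℝ) - 1 by ring]
    ring

-- from t2.lean


lemma aux_exp_iter (c : ℝ) : ∀ (n : ℕ) (u : ℝ),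
    iteratedDeriv n (fun u : ℝ => Real.exp (-(c * u))) u = (-c)^n * Real.exp (-(c*u)) := by
  intro n
  induction n with
  | zero => intro u; simp
  | succ n ih =>
    intro u
    rw [iteratedDeriv_succ]
    have h1 : deriv (iteratedDeriv n (fun u : ℝ => Real.exp (-(c * u)))) u
        = deriv (fun u : ℝ => (-c)^n * Real.exp (-(c*u))) u := by
      apply Filter.EventuallyEq.deriv_eq
      filter_upwards with v using ih v
    have h2 : HasDerivAt (fun u : ℝ => Real.exp (-(c*u))) (Real.exp (-(c*u)) * (-c)) u := by
      simpa using (((hasDerivAt_id u).const_mul c).neg).exp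
    rw [h1, deriv_const_mul _ h2.differentiableAt, h2.deriv]
    ring

lemma aux_expm1_iter (c : ℝ) (n : ℕ) (hn : n ≠ 0) (u : ℝ) :
    iteratedDeriv n (fun u : ℝ => Real.exp (-(c * u)) - 1) u = (-c)^n * Real.exp (-(c*u)) := by
  obtain ⟨m, rfl⟩ := Nat.exists_eq_succ_of_ne_zero hn
  rw [iteratedDeriv_succ']
  have hd : deriv (fun u : ℝ => Real.exp (-(c*u)) - 1) = deriv (fun u : ℝ => Real.exp (-(c*u))) :=
    funext fun v => deriv_sub_const _
  rw [hd, ← iteratedDeriv_succ']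
  exact aux_exp_iter c (m+1) u

/-- uniform bound for derivatives of `u ↦ exp(-(c u)) - 1` at `u ≥ A`, `c ≥ 1`. -/
lemma aux_expm1_bound (A : ℝ) (hA : 0 < A) (n : ℕ) :
    ∃ C : ℝ, 0 ≤ C ∧ ∀ c : ℝ, 1 ≤ c → ∀ i ≤ n, ∀ u : ℝ, A ≤ u →
      ‖iteratedFDeriv ℝ i (fun u : ℝ => Real.exp (-(c * u)) - 1) u‖ ≤ C := by
  refine ⟨max 1 ((n.factorial : ℝ) / A ^ n), le_trans zero_le_one (le_max_left _ _), ?_⟩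
  intro c hc i hi u hu
  rw [norm_iteratedFDeriv_eq_norm_iteratedDeriv]
  have hcpos : (0:ℝ) < c := lt_of_lt_of_le zero_lt_one hc
  have hcu : 0 ≤ c * u := mul_nonneg hcpos.le (le_trans hA.le hu)
  rcases Nat.eq_zero_or_pos i with h0 | hpos
  · subst h0
    simp only [iteratedDeriv_zero]
    have h1 : Real.exp (-(c * u)) ≤ 1 := Real.exp_le_one_iff.2 (neg_nonpos.2 hcu)
    have h2 : 0 < Real.exp (-(c * u)) := Real.exp_pos _
    have h3 : |Real.exp (-(c * u)) - 1| ≤ 1 := abs_le.2 ⟨by linarith, by linarith⟩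
    exact le_trans h3 (le_max_left _ _)
  · rw [aux_expm1_iter c i hpos.ne' u]
    have key : c ^ i * Real.exp (-(c * u)) ≤ (n.factorial : ℝ) / A ^ n := by
      have h1 : c ^ i ≤ c ^ n := pow_le_pow_right₀ hc hi
      have h2 : Real.exp (-(c * u)) ≤ Real.exp (-(c * A)) := by
        apply Real.exp_le_exp.2; nlinarith
      have h3 : (c * A) ^ n ≤ Real.exp (c * A) * (n.factorial : ℝ) := by
        have := Real.pow_div_factorial_le_exp (x := c * A) (by positivity) n
        rw [div_le_iff₀ (by positivity)] at this
        linarith [this]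
      have h4 : c ^ n * Real.exp (-(c * A)) ≤ (n.factorial : ℝ) / A ^ n := by
        rw [Real.exp_neg, ← div_eq_mul_inv, div_le_div_iff₀ (Real.exp_pos _) (by positivity)]
        calc c ^ n * A ^ n = (c * A) ^ n := (mul_pow c A n).symm
          _ ≤ Real.exp (c * A) * (n.factorial : ℝ) := h3
          _ = (n.factorial : ℝ) * Real.exp (c * A) := by ring
      calc c ^ i * Real.exp (-(c*u))
          ≤ c ^ n * Real.exp (-(c*A)) :=
            mul_le_mul h1 h2 (Real.exp_pos _).le (by positivity)
        _ ≤ _ := h4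
    have : ‖(-c) ^ i * Real.exp (-(c * u))‖ = c ^ i * Real.exp (-(c * u)) := by
      rw [Real.norm_eq_abs, abs_mul, abs_pow, abs_neg, abs_of_pos hcpos,
        abs_of_pos (Real.exp_pos _)]
    rw [this]
    exact le_trans key (le_max_right _ _)

-- from t3.lean


lemma aux_rpow_bound (A B p : ℝ) (hA : 0 < A) (n : ℕ) :
    ∃ C : ℝ, 0 ≤ C ∧ ∀ i ≤ n, ∀ t ∈ Set.Icc A B,
      ‖iteratedDerivWithin i (fun s : ℝ => s ^ p) (Set.Ioi 0) t‖ ≤ C := by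
  obtain ⟨C, hC0, hC⟩ := aux_exists_bound
    (fun i => |∏ k ∈ Finset.range i, (p - k)| * max (A ^ (p - i)) (B ^ (p - i))) n
  refine ⟨C, hC0, fun i hi t ht => ?_⟩
  have htpos : 0 < t := lt_of_lt_of_le hA ht.1
  rw [aux_rpow_iter p i t htpos, Real.norm_eq_abs, abs_mul]
  refine le_trans (mul_le_mul_of_nonneg_left ?_ (abs_nonneg _)) (hC i hi)
  rw [abs_of_pos (Real.rpow_pos_of_pos htpos _)]
  rcases le_or_gt 0 (p - i) with h | h
  · exact le_trans (Real.rpow_le_rpow htpos.le ht.2 h) (le_max_right _ _)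
  · exact le_trans (Real.rpow_le_rpow_of_nonpos hA ht.1 h.le) (le_max_left _ _)

/-- Main 1D bound: derivatives of `t ↦ t^(-θ/2) * (exp (-(c * t^(θ/2))) - 1)` on `Ioi 0`,
uniformly over `c ≥ 1`, on `Icc A B`. -/
-- from t4.lean


lemma aux_gc_bound (θ A B : ℝ) (hθ : 0 < θ) (hA : 0 < A) (n : ℕ) :
    ∃ C : ℝ, 0 ≤ C ∧ ∀ c : ℝ, 1 ≤ c → ∀ i ≤ n, ∀ t ∈ Set.Icc A B,
      ‖iteratedFDerivWithin ℝ i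
        (fun t : ℝ => t ^ (-θ/2) * (Real.exp (-(c * t ^ (θ/2))) - 1)) (Set.Ioi 0) t‖ ≤ C := by
  obtain ⟨C₁, hC₁0, hC₁⟩ := aux_rpow_bound A B (-θ/2) hA n
  obtain ⟨C₂, hC₂0, hC₂⟩ := aux_rpow_bound A B (θ/2) hA n
  obtain ⟨C₃, hC₃0, hC₃⟩ := aux_expm1_bound (A ^ (θ/2)) (Real.rpow_pos_of_pos hA _) n
  set D : ℝ := max C₂ 1 with hD_def
  have hD1 : (1:ℝ) ≤ D := le_max_right _ _
  set K : ℝ := (n.factorial : ℝ) * C₃ * D ^ n with hK_def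
  have hK0 : 0 ≤ K := by positivity
  refine ⟨2 ^ n * C₁ * K, by positivity, ?_⟩
  intro c hc m hm t ht
  have htpos : 0 < t := lt_of_lt_of_le hA ht.1
  have htI : t ∈ Set.Ioi (0:ℝ) := htpos
  have hsUD : UniqueDiffOn ℝ (Set.Ioi (0:ℝ)) := isOpen_Ioi.uniqueDiffOn
  -- smoothness facts
  have hP : ContDiffOn ℝ (⊤:ℕ∞) (fun s : ℝ => s ^ (-θ/2)) (Set.Ioi 0) := fun s hs =>
    (Real.contDiffAt_rpow_const_of_ne (ne_of_gt hs)).contDiffWithinAt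
  have hR : ContDiffOn ℝ (⊤:ℕ∞) (fun s : ℝ => s ^ (θ/2)) (Set.Ioi 0) := fun s hs =>
    (Real.contDiffAt_rpow_const_of_ne (ne_of_gt hs)).contDiffWithinAt
  have hW : ContDiff ℝ (⊤:ℕ∞) (fun u : ℝ => Real.exp (-(c * u)) - 1) :=
    (Real.contDiff_exp.comp ((contDiff_const.mul contDiff_id).neg)).sub contDiff_const
  -- bound on the composition factor
  have hcomp : ∀ k ≤ n,
      ‖iteratedFDerivWithin ℝ k (fun t : ℝ => Real.exp (-(c * t ^ (θ/2))) - 1)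
        (Set.Ioi 0) t‖ ≤ K := by
    intro k hk
    have : ‖iteratedFDerivWithin ℝ k
        ((fun u : ℝ => Real.exp (-(c * u)) - 1) ∘ (fun s : ℝ => s ^ (θ/2))) (Set.Ioi 0) t‖
        ≤ (k.factorial : ℝ) * C₃ * D ^ k := by
      apply norm_iteratedFDerivWithin_comp_le (t := Set.univ)
        hW.contDiffOn hR (by exact_mod_cast le_top) uniqueDiffOn_univ hsUD
        (Set.mapsTo_univ _ _) htI
      · intro i hi
        rw [iteratedFDerivWithin_univ]
        apply hC₃ c hc i (le_trans hi (le_trans hk le_rfl))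
        exact Real.rpow_le_rpow hA.le ht.1 (by positivity)
      · intro i hi1 hik
        have h1 : ‖iteratedFDerivWithin ℝ i (fun s : ℝ => s ^ (θ/2)) (Set.Ioi 0) t‖ ≤ C₂ := by
          rw [norm_iteratedFDerivWithin_eq_norm_iteratedDerivWithin]
          exact hC₂ i (le_trans hik hk) t ht
        calc ‖iteratedFDerivWithin ℝ i (fun s : ℝ => s ^ (θ/2)) (Set.Ioi 0) t‖
            ≤ D := le_trans h1 (le_max_left _ _)
          _ = D ^ 1 := (pow_one D).symm
          _ ≤ D ^ i := pow_le_pow_right₀ hD1 hi1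
    refine le_trans this ?_
    rw [hK_def]
    have h1 : (k.factorial : ℝ) ≤ (n.factorial : ℝ) := by
      exact_mod_cast Nat.factorial_le hk
    have h2 : D ^ k ≤ D ^ n := pow_le_pow_right₀ hD1 hk
    have hD0 : (0:ℝ) ≤ D ^ k := by positivity
    calc (k.factorial : ℝ) * C₃ * D ^ k ≤ (n.factorial : ℝ) * C₃ * D ^ k := by
          apply mul_le_mul_of_nonneg_right (mul_le_mul_of_nonneg_right h1 hC₃0) hD0
      _ ≤ (n.factorial : ℝ) * C₃ * D ^ n := by
          apply mul_le_mul_of_nonneg_left h2 (by positivity)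
  -- product bound
  have hQ : ContDiffOn ℝ (⊤:ℕ∞) (fun t : ℝ => Real.exp (-(c * t ^ (θ/2))) - 1) (Set.Ioi 0) :=
    hW.comp_contDiffOn hR
  have hmul := norm_iteratedFDerivWithin_mul_le (𝕜 := ℝ)
    (f := fun s : ℝ => s ^ (-θ/2)) (g := fun t : ℝ => Real.exp (-(c * t ^ (θ/2))) - 1)
    hP hQ hsUD htI (n := m) (by exact_mod_cast le_top)
  refine le_trans hmul ?_
  have hterm : ∀ i ∈ Finset.range (m+1),
      (m.choose i : ℝ) * ‖iteratedFDerivWithin ℝ i (fun s : ℝ => s ^ (-θ/2)) (Set.Ioi 0) t‖ *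
        ‖iteratedFDerivWithin ℝ (m - i) (fun t : ℝ => Real.exp (-(c * t ^ (θ/2))) - 1)
          (Set.Ioi 0) t‖ ≤ (m.choose i : ℝ) * (C₁ * K) := by
    intro i hi
    rw [Finset.mem_range, Nat.lt_succ_iff] at hi
    have h1 : ‖iteratedFDerivWithin ℝ i (fun s : ℝ => s ^ (-θ/2)) (Set.Ioi 0) t‖ ≤ C₁ := by
      rw [norm_iteratedFDerivWithin_eq_norm_iteratedDerivWithin]
      exact hC₁ i (le_trans hi hm) t ht
    have h2 := hcomp (m - i) (le_trans (Nat.sub_le _ _) hm)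
    calc (m.choose i : ℝ) * ‖iteratedFDerivWithin ℝ i _ (Set.Ioi 0) t‖ *
          ‖iteratedFDerivWithin ℝ (m-i) _ (Set.Ioi 0) t‖
        ≤ (m.choose i : ℝ) * C₁ * K := by
          apply mul_le_mul (mul_le_mul_of_nonneg_left h1 (by positivity)) h2 (norm_nonneg _)
          positivity
      _ = (m.choose i : ℝ) * (C₁ * K) := by ring
  refine le_trans (Finset.sum_le_sum hterm) ?_
  rw [← Finset.sum_mul]
  have : ∑ i ∈ Finset.range (m+1), (m.choose i : ℝ) = 2 ^ m := by
    rw [← Nat.cast_sum]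
    norm_cast
    exact Nat.sum_range_choose m
  rw [this]
  have h2 : (2:ℝ) ^ m ≤ 2 ^ n := pow_le_pow_right₀ one_le_two hm
  calc (2:ℝ) ^ m * (C₁ * K) ≤ 2 ^ n * (C₁ * K) := by
        apply mul_le_mul_of_nonneg_right h2 (by positivity)
    _ = 2 ^ n * C₁ * K := by ring

-- from t5.lean


variable {E F : Type*} [NormedAddCommGroup E] [NormedSpace ℝ E]
  [NormedAddCommGroup F] [NormedSpace ℝ F]

lemma aux_clm_iter_ge_two (g : E →L[ℝ] F) {n : ℕ} (hn : 2 ≤ n) (x : E) :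
    iteratedFDeriv ℝ n (fun y => g y) x = 0 := by
  obtain ⟨m, rfl⟩ : ∃ m, n = m + 1 := ⟨n - 1, by omega⟩
  ext v
  rw [iteratedFDeriv_succ_apply_right]
  have h1 : (fun y : E => fderiv ℝ (fun z => g z) y) = fun _ : E => (g : E →L[ℝ] F) := by
    funext y; exact g.fderiv
  rw [h1, iteratedFDeriv_const_of_ne (by omega)]
  simp

lemma aux_clm_iter_one (g : E →L[ℝ] F) (x : E) :
    ‖iteratedFDeriv ℝ 1 (fun y => g y) x‖ ≤ ‖g‖ := by
  apply ContinuousMultilinearMap.opNorm_le_bound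
  · exact norm_nonneg g
  intro m
  rw [iteratedFDeriv_succ_apply_right]
  have h1 : (fun y : E => fderiv ℝ (fun z => g z) y) = fun _ : E => (g : E →L[ℝ] F) := by
    funext y; exact g.fderiv
  rw [h1]
  simp only [iteratedFDeriv_zero_apply]
  calc ‖g (m (Fin.last 0))‖ ≤ ‖g‖ * ‖m (Fin.last 0)‖ := g.le_opNorm _
    _ = ‖g‖ * ∏ i, ‖m i‖ := by
        rw [Fin.prod_univ_one]; rfl

/-- bound for iterated derivatives of products of two coordinates-type functions -/
lemma aux_clm_sq_bound (g : E →L[ℝ] ℝ) (hg : ‖g‖ ≤ 1) (n : ℕ) (x : E) :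
    ‖iteratedFDeriv ℝ n (fun y => g y * g y) x‖ ≤ 2 ^ n * (max ‖x‖ 1) ^ 2 := by
  have hb : ∀ i : ℕ, ‖iteratedFDeriv ℝ i (fun y => g y) x‖ ≤ max ‖x‖ 1 := by
    intro i
    match i with
    | 0 => simp only [norm_iteratedFDeriv_zero]
           calc ‖g x‖ ≤ ‖g‖ * ‖x‖ := g.le_opNorm x
             _ ≤ 1 * ‖x‖ := by apply mul_le_mul_of_nonneg_right hg (norm_nonneg _)
             _ = ‖x‖ := one_mul _
             _ ≤ max ‖x‖ 1 := le_max_left _ _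
    | 1 => exact le_trans (aux_clm_iter_one g x) (le_trans hg (le_max_right _ _))
    | (m+2) => rw [aux_clm_iter_ge_two g (by omega) x]; simp
  have h := norm_iteratedFDeriv_mul_le (𝕜 := ℝ) (f := fun y => g y) (g := fun y => g y)
    g.contDiff g.contDiff x (n := n) (le_top : (n : WithTop ℕ∞) ≤ ⊤)
  refine le_trans h ?_
  have hterm : ∀ i ∈ Finset.range (n+1),
      (n.choose i : ℝ) * ‖iteratedFDeriv ℝ i (fun y => g y) x‖ *
        ‖iteratedFDeriv ℝ (n-i) (fun y => g y) x‖ ≤ (n.choose i : ℝ) * (max ‖x‖ 1)^2 := by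
    intro i _
    have h1 := hb i
    have h2 := hb (n - i)
    have hM : (0:ℝ) ≤ max ‖x‖ 1 := le_trans zero_le_one (le_max_right _ _)
    calc (n.choose i : ℝ) * ‖iteratedFDeriv ℝ i (fun y => g y) x‖ *
          ‖iteratedFDeriv ℝ (n-i) (fun y => g y) x‖
        ≤ (n.choose i : ℝ) * (max ‖x‖ 1) * (max ‖x‖ 1) := by
          apply mul_le_mul (mul_le_mul_of_nonneg_left h1 (by positivity)) h2 (norm_nonneg _)
          positivity
      _ = (n.choose i : ℝ) * (max ‖x‖ 1)^2 := by ring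
  refine le_trans (Finset.sum_le_sum hterm) ?_
  rw [← Finset.sum_mul]
  have : ∑ i ∈ Finset.range (n+1), (n.choose i : ℝ) = 2 ^ n := by
    rw [← Nat.cast_sum]; norm_cast; exact Nat.sum_range_choose n
  rw [this]

-- from t6.lean


variable {d : ℕ}

/-- the squared-norm function written via coordinates -/
def sqfun (d : ℕ) : EuclideanSpace ℝ (Fin d) → ℝ :=
  fun η => ∑ i, (EuclideanSpace.proj i) η * (EuclideanSpace.proj i) η

lemma sqfun_eq (η : EuclideanSpace ℝ (Fin d)) : sqfun d η = ‖η‖ ^ 2 := by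
  have h1 : ‖η‖ ^ 2 = ∑ i, ‖η i‖ ^ 2 := by
    rw [EuclideanSpace.norm_eq, Real.sq_sqrt]
    positivity
  rw [h1, sqfun]
  congr 1
  funext i
  rw [Real.norm_eq_abs, sq_abs, sq]
  rfl

lemma sqfun_contDiff : ContDiff ℝ (⊤:ℕ∞) (sqfun d) := by
  apply ContDiff.sum
  intro i _
  exact ((EuclideanSpace.proj (𝕜 := ℝ) i).contDiff).mul
    ((EuclideanSpace.proj (𝕜 := ℝ) i).contDiff)

lemma proj_norm_le (i : Fin d) : ‖(EuclideanSpace.proj (𝕜 := ℝ) i)‖ ≤ 1 := by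
  apply ContinuousLinearMap.opNorm_le_bound _ zero_le_one
  intro η
  rw [one_mul]
  have h1 : ‖η i‖ ^ 2 ≤ ∑ j, ‖η j‖ ^ 2 :=
    Finset.single_le_sum (f := fun j => ‖η j‖ ^ 2) (fun j _ => by positivity) (Finset.mem_univ i)
  have h2 : ‖η‖ = Real.sqrt (∑ j, ‖η j‖ ^ 2) := EuclideanSpace.norm_eq η
  calc ‖(EuclideanSpace.proj (𝕜 := ℝ) i) η‖ = Real.sqrt (‖η i‖ ^ 2) := by
        rw [Real.sqrt_sq (norm_nonneg _)]; rfl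
    _ ≤ Real.sqrt (∑ j, ‖η j‖ ^ 2) := Real.sqrt_le_sqrt h1
    _ = ‖η‖ := h2.symm

lemma sqfun_deriv_bound (k : ℕ) (η : EuclideanSpace ℝ (Fin d)) :
    ‖iteratedFDeriv ℝ k (sqfun d) η‖ ≤ d * 2 ^ k * (max ‖η‖ 1) ^ 2 := by
  unfold sqfun
  rw [iteratedFDeriv_sum (fun j _ =>
    (((EuclideanSpace.proj (𝕜 := ℝ) j).contDiff).mul ((EuclideanSpace.proj (𝕜 := ℝ) j).contDiff)))]
  rw [Finset.sum_apply]
  refine le_trans (norm_sum_le _ _) ?_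
  refine le_trans (Finset.sum_le_sum
    (fun j _ => aux_clm_sq_bound _ (proj_norm_le j) k η)) ?_
  rw [Finset.sum_const, Finset.card_univ, Fintype.card_fin, nsmul_eq_mul]
  exact le_of_eq (by ring)

/-- The key uniform derivative bound for the rescaled integrand. -/
lemma aux_h_bound (d : ℕ) (θ a b : ℝ) (hθ : 0 < θ) (ha : 0 < a) (hab : a < b)
    (τ : EuclideanSpace ℝ (Fin d) → ℝ) (hτ : ContDiff ℝ (⊤:ℕ∞) τ)
    (hsupp : Function.support τ ⊆ {ξ | a ≤ ‖ξ‖ ∧ ‖ξ‖ ≤ b}) (n : ℕ) :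
    ∃ M : ℝ, 0 ≤ M ∧ ∀ c : ℝ, 1 ≤ c → ∀ η : EuclideanSpace ℝ (Fin d),
      ‖iteratedFDeriv ℝ n (fun η => τ η *
        ((sqfun d η) ^ (-θ/2) * (Real.exp (-(c * (sqfun d η) ^ (θ/2))) - 1))) η‖ ≤ M := by
  classical
  -- bound for derivatives of τ
  have hcsτ : HasCompactSupport τ := by
    apply HasCompactSupport.intro (K := {ξ : EuclideanSpace ℝ (Fin d) | a ≤ ‖ξ‖ ∧ ‖ξ‖ ≤ b})
    · apply IsCompact.of_isClosed_subset (isCompact_closedBall (0:EuclideanSpace ℝ (Fin d)) b)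
      · exact (isClosed_le continuous_const continuous_norm).inter
          (isClosed_le continuous_norm continuous_const)
      · intro ξ hξ; simpa [Metric.mem_closedBall, dist_eq_norm] using hξ.2
    · intro ξ hξ
      by_contra hne
      exact hξ (hsupp hne)
  have hTi : ∀ i : ℕ, ∃ T : ℝ, ∀ ξ, ‖iteratedFDeriv ℝ i τ ξ‖ ≤ T := fun i =>
    (hcsτ.iteratedFDeriv i).exists_bound_of_continuous
      (hτ.continuous_iteratedFDeriv (by exact_mod_cast le_top))
  choose Tf hTf using hTi
  obtain ⟨T, hT0, hT⟩ := aux_exists_bound Tf n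
  -- 1D bound
  obtain ⟨Cg, hCg0, hCg⟩ := aux_gc_bound θ (a^2) (b^2) hθ (by positivity) n
  -- D for sq derivatives
  set D : ℝ := max ((d:ℝ) * 2 ^ n * (max b 1) ^ 2) 1 with hD_def
  have hD1 : (1:ℝ) ≤ D := le_max_right _ _
  set K : ℝ := (n.factorial : ℝ) * Cg * D ^ n with hK_def
  have hK0 : 0 ≤ K := by positivity
  refine ⟨2 ^ n * T * K, by positivity, ?_⟩
  intro c hc η
  by_cases hη : a ≤ ‖η‖ ∧ ‖η‖ ≤ b
  case neg =>
    -- η is in the open set where the function vanishes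
    have hV : IsOpen {ζ : EuclideanSpace ℝ (Fin d) | ‖ζ‖ < a ∨ b < ‖ζ‖} := by
      exact (isOpen_lt continuous_norm continuous_const).union
        (isOpen_lt continuous_const continuous_norm)
    have hηV : η ∈ {ζ : EuclideanSpace ℝ (Fin d) | ‖ζ‖ < a ∨ b < ‖ζ‖} := by
      rcases not_and_or.1 hη with h | h
      · exact Or.inl (lt_of_not_ge h)
      · exact Or.inr (lt_of_not_ge h)
    have hzero : ∀ ζ ∈ {ζ : EuclideanSpace ℝ (Fin d) | ‖ζ‖ < a ∨ b < ‖ζ‖},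
        τ ζ * ((sqfun d ζ) ^ (-θ/2) * (Real.exp (-(c * (sqfun d ζ) ^ (θ/2))) - 1)) = 0 := by
      intro ζ hζ
      have : τ ζ = 0 := by
        by_contra hne
        have := hsupp hne
        rcases hζ with h | h
        · exact absurd this.1 (not_le.2 h)
        · exact absurd this.2 (not_le.2 h)
      rw [this, zero_mul]
    have heq : (fun ζ => τ ζ * ((sqfun d ζ) ^ (-θ/2) *
        (Real.exp (-(c * (sqfun d ζ) ^ (θ/2))) - 1))) =ᶠ[nhds η] (fun _ => (0:ℝ)) := by
      filter_upwards [hV.mem_nhds hηV] with ζ hζ using hzero ζ hζ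
    have : iteratedFDeriv ℝ n (fun ζ => τ ζ * ((sqfun d ζ) ^ (-θ/2) *
        (Real.exp (-(c * (sqfun d ζ) ^ (θ/2))) - 1))) η
        = iteratedFDeriv ℝ n (fun _ : EuclideanSpace ℝ (Fin d) => (0:ℝ)) η := by
      rw [← iteratedFDerivWithin_univ, ← iteratedFDerivWithin_univ]
      exact Filter.EventuallyEq.iteratedFDerivWithin_eq
        (heq.filter_mono nhdsWithin_le_nhds) (hzero η hηV) n
    rw [this, iteratedFDeriv_zero_fun]
    simp only [Pi.zero_apply, norm_zero]
    positivity
  case pos =>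
    set U : Set (EuclideanSpace ℝ (Fin d)) := {ζ | a/2 < ‖ζ‖} with hU_def
    have hUopen : IsOpen U := isOpen_lt continuous_const continuous_norm
    have hηU : η ∈ U := by
      simp only [hU_def, Set.mem_setOf_eq]; linarith [hη.1]
    have hUD : UniqueDiffOn ℝ U := hUopen.uniqueDiffOn
    have hsqpos : ∀ ζ ∈ U, 0 < sqfun d ζ := by
      intro ζ hζ
      rw [sqfun_eq]
      have : 0 < ‖ζ‖ := lt_of_le_of_lt (by positivity) hζ
      positivity
    -- rewrite global deriv as within-U deriv
    rw [← iteratedFDerivWithin_of_isOpen n hUopen hηU]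
    -- product bound
    have hgcOn : ContDiffOn ℝ (⊤:ℕ∞)
        (fun t : ℝ => t ^ (-θ/2) * (Real.exp (-(c * t ^ (θ/2))) - 1)) (Set.Ioi 0) := by
      have hP : ContDiffOn ℝ (⊤:ℕ∞) (fun s : ℝ => s ^ (-θ/2)) (Set.Ioi 0) := fun s hs =>
        (Real.contDiffAt_rpow_const_of_ne (ne_of_gt hs)).contDiffWithinAt
      have hR : ContDiffOn ℝ (⊤:ℕ∞) (fun s : ℝ => s ^ (θ/2)) (Set.Ioi 0) := fun s hs =>
        (Real.contDiffAt_rpow_const_of_ne (ne_of_gt hs)).contDiffWithinAt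
      have hW : ContDiff ℝ (⊤:ℕ∞) (fun u : ℝ => Real.exp (-(c * u)) - 1) :=
        (Real.contDiff_exp.comp ((contDiff_const.mul contDiff_id).neg)).sub contDiff_const
      exact hP.mul (hW.comp_contDiffOn hR)
    have hcompOn : ContDiffOn ℝ (⊤:ℕ∞)
        (fun ζ => (sqfun d ζ) ^ (-θ/2) * (Real.exp (-(c * (sqfun d ζ) ^ (θ/2))) - 1)) U :=
      hgcOn.comp (sqfun_contDiff.contDiffOn) (fun ζ hζ => hsqpos ζ hζ)
    have hmul := norm_iteratedFDerivWithin_mul_le (𝕜 := ℝ)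
      (f := τ) (g := fun ζ => (sqfun d ζ) ^ (-θ/2) *
        (Real.exp (-(c * (sqfun d ζ) ^ (θ/2))) - 1))
      hτ.contDiffOn hcompOn hUD hηU (n := n) (by exact_mod_cast le_top)
    refine le_trans hmul ?_
    -- bound on composition factor
    have hcomp : ∀ k ≤ n, ‖iteratedFDerivWithin ℝ k
        (fun ζ => (sqfun d ζ) ^ (-θ/2) * (Real.exp (-(c * (sqfun d ζ) ^ (θ/2))) - 1)) U η‖
        ≤ K := by
      intro k hk
      have hcle : ‖iteratedFDerivWithin ℝ k
          ((fun t : ℝ => t ^ (-θ/2) * (Real.exp (-(c * t ^ (θ/2))) - 1)) ∘ (sqfun d)) U η‖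
          ≤ (k.factorial : ℝ) * Cg * D ^ k := by
        apply norm_iteratedFDerivWithin_comp_le (t := Set.Ioi 0)
          hgcOn (sqfun_contDiff.contDiffOn) (by exact_mod_cast le_top)
          (isOpen_Ioi.uniqueDiffOn) hUD (fun ζ hζ => hsqpos ζ hζ) hηU
        · intro i hi
          apply hCg c hc i (le_trans hi hk)
          rw [sqfun_eq]
          constructor
          · exact pow_le_pow_left₀ ha.le hη.1 2
          · exact pow_le_pow_left₀ (norm_nonneg η) hη.2 2
        · intro i hi1 hik
          have h1 : ‖iteratedFDerivWithin ℝ i (sqfun d) U η‖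
              ≤ (d:ℝ) * 2 ^ n * (max b 1) ^ 2 := by
            rw [iteratedFDerivWithin_of_isOpen i hUopen hηU]
            refine le_trans (sqfun_deriv_bound i η) ?_
            have h2 : ((2:ℝ)) ^ i ≤ 2 ^ n := pow_le_pow_right₀ one_le_two (le_trans hik hk)
            have h3 : max ‖η‖ 1 ≤ max b 1 := max_le_max hη.2 le_rfl
            have h4 : (max ‖η‖ 1) ^ 2 ≤ (max b 1) ^ 2 :=
              pow_le_pow_left₀ (le_trans zero_le_one (le_max_right _ _)) h3 2
            calc (d:ℝ) * 2 ^ i * (max ‖η‖ 1) ^ 2 ≤ (d:ℝ) * 2 ^ n * (max ‖η‖ 1) ^ 2 := by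
                  apply mul_le_mul_of_nonneg_right (by
                    apply mul_le_mul_of_nonneg_left h2 (by positivity)) (by positivity)
              _ ≤ (d:ℝ) * 2 ^ n * (max b 1) ^ 2 := by
                  apply mul_le_mul_of_nonneg_left h4 (by positivity)
          calc ‖iteratedFDerivWithin ℝ i (sqfun d) U η‖ ≤ D :=
                le_trans h1 (le_max_left _ _)
            _ = D ^ 1 := (pow_one D).symm
            _ ≤ D ^ i := pow_le_pow_right₀ hD1 hi1
      refine le_trans hcle ?_
      rw [hK_def]
      have h1 : (k.factorial : ℝ) ≤ (n.factorial : ℝ) := by exact_mod_cast Nat.factorial_le hk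
      have h2 : D ^ k ≤ D ^ n := pow_le_pow_right₀ hD1 hk
      calc (k.factorial : ℝ) * Cg * D ^ k ≤ (n.factorial : ℝ) * Cg * D ^ k :=
            mul_le_mul_of_nonneg_right (mul_le_mul_of_nonneg_right h1 hCg0) (by positivity)
        _ ≤ (n.factorial : ℝ) * Cg * D ^ n :=
            mul_le_mul_of_nonneg_left h2 (by positivity)
    -- assemble the sum
    have hterm : ∀ i ∈ Finset.range (n+1),
        (n.choose i : ℝ) * ‖iteratedFDerivWithin ℝ i τ U η‖ *
          ‖iteratedFDerivWithin ℝ (n-i)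
            (fun ζ => (sqfun d ζ) ^ (-θ/2) * (Real.exp (-(c * (sqfun d ζ) ^ (θ/2))) - 1)) U η‖
          ≤ (n.choose i : ℝ) * (T * K) := by
      intro i hi
      rw [Finset.mem_range, Nat.lt_succ_iff] at hi
      have h1 : ‖iteratedFDerivWithin ℝ i τ U η‖ ≤ T := by
        rw [iteratedFDerivWithin_of_isOpen i hUopen hηU]
        exact le_trans (hTf i η) (hT i hi)
      have h2 := hcomp (n-i) (Nat.sub_le _ _)
      calc (n.choose i : ℝ) * ‖iteratedFDerivWithin ℝ i τ U η‖ *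
            ‖iteratedFDerivWithin ℝ (n-i) _ U η‖
          ≤ (n.choose i : ℝ) * T * K := by
            apply mul_le_mul (mul_le_mul_of_nonneg_left h1 (by positivity)) h2 (norm_nonneg _)
            positivity
        _ = (n.choose i : ℝ) * (T * K) := by ring
    refine le_trans (Finset.sum_le_sum hterm) ?_
    rw [← Finset.sum_mul]
    have hsum : ∑ i ∈ Finset.range (n+1), (n.choose i : ℝ) = 2 ^ n := by
      rw [← Nat.cast_sum]; norm_cast; exact Nat.sum_range_choose n
    rw [hsum]
    calc (2:ℝ) ^ n * (T * K) = 2 ^ n * T * K := by ring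
      _ ≤ 2 ^ n * T * K := le_rfl

-- from t8.lean



section FB

variable (d : ℕ) (θ a b : ℝ) (τ : EuclideanSpace ℝ (Fin d) → ℝ) (c : ℝ)

/-- The rescaled integrand. -/
def hfun : EuclideanSpace ℝ (Fin d) → ℝ :=
  fun η => τ η * ((sqfun d η) ^ (-θ/2) * (Real.exp (-(c * (sqfun d η) ^ (θ/2))) - 1))

/-- Its complexification. -/
def hfunC : EuclideanSpace ℝ (Fin d) → ℂ := fun η => ((hfun d θ τ c η : ℝ) : ℂ)

variable {d θ a b τ c}

lemma hfun_contDiff (hθ : 0 < θ) (ha : 0 < a)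
    (hτ : ContDiff ℝ (⊤:ℕ∞) τ) (hsupp : Function.support τ ⊆ {ξ | a ≤ ‖ξ‖ ∧ ‖ξ‖ ≤ b}) :
    ContDiff ℝ (⊤:ℕ∞) (hfun d θ τ c) := by
  rw [contDiff_iff_contDiffAt]
  intro η
  by_cases hη : a/2 < ‖η‖
  · -- smooth on the open set U
    have hUopen : IsOpen {ζ : EuclideanSpace ℝ (Fin d) | a/2 < ‖ζ‖} :=
      isOpen_lt continuous_const continuous_norm
    have hsqpos : ∀ ζ ∈ {ζ : EuclideanSpace ℝ (Fin d) | a/2 < ‖ζ‖}, 0 < sqfun d ζ := by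
      intro ζ hζ
      rw [sqfun_eq]
      have h0 : (0:ℝ) < ‖ζ‖ := lt_of_le_of_lt (by positivity) hζ
      positivity
    have hgcOn : ContDiffOn ℝ (⊤:ℕ∞)
        (fun t : ℝ => t ^ (-θ/2) * (Real.exp (-(c * t ^ (θ/2))) - 1)) (Set.Ioi 0) := by
      have hP : ContDiffOn ℝ (⊤:ℕ∞) (fun s : ℝ => s ^ (-θ/2)) (Set.Ioi 0) := fun s hs =>
        (Real.contDiffAt_rpow_const_of_ne (ne_of_gt hs)).contDiffWithinAt
      have hR : ContDiffOn ℝ (⊤:ℕ∞) (fun s : ℝ => s ^ (θ/2)) (Set.Ioi 0) := fun s hs =>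
        (Real.contDiffAt_rpow_const_of_ne (ne_of_gt hs)).contDiffWithinAt
      have hW : ContDiff ℝ (⊤:ℕ∞) (fun u : ℝ => Real.exp (-(c * u)) - 1) :=
        (Real.contDiff_exp.comp ((contDiff_const.mul contDiff_id).neg)).sub contDiff_const
      exact hP.mul (hW.comp_contDiffOn hR)
    have hOn : ContDiffOn ℝ (⊤:ℕ∞) (hfun d θ τ c) {ζ : EuclideanSpace ℝ (Fin d) | a/2 < ‖ζ‖} :=
      hτ.contDiffOn.mul (hgcOn.comp (sqfun_contDiff.contDiffOn) hsqpos)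
    exact hOn.contDiffAt (hUopen.mem_nhds hη)
  · -- vanishes near η
    have hball : IsOpen {ζ : EuclideanSpace ℝ (Fin d) | ‖ζ‖ < a} :=
      isOpen_lt continuous_norm continuous_const
    have hmem : η ∈ {ζ : EuclideanSpace ℝ (Fin d) | ‖ζ‖ < a} := by
      simp only [Set.mem_setOf_eq]
      push_neg at hη
      linarith
    have heq : hfun d θ τ c =ᶠ[nhds η] (fun _ => (0:ℝ)) := by
      filter_upwards [hball.mem_nhds hmem] with ζ hζ
      have hτ0 : τ ζ = 0 := by
        by_contra hne
        exact absurd (hsupp hne).1 (not_le.2 hζ)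
      simp [hfun, hτ0]
    exact contDiffAt_const.congr_of_eventuallyEq heq

lemma hfun_vanish (ha : 0 < a) (hsupp : Function.support τ ⊆ {ξ | a ≤ ‖ξ‖ ∧ ‖ξ‖ ≤ b})
    (n : ℕ) (η : EuclideanSpace ℝ (Fin d)) (hη : η ∉ Metric.closedBall (0:EuclideanSpace ℝ (Fin d)) b) :
    iteratedFDeriv ℝ n (hfun d θ τ c) η = 0 := by
  rw [Metric.mem_closedBall, dist_eq_norm, sub_zero, not_le] at hη
  have hV : IsOpen {ζ : EuclideanSpace ℝ (Fin d) | b < ‖ζ‖} :=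
    isOpen_lt continuous_const continuous_norm
  have heq : hfun d θ τ c =ᶠ[nhds η] (fun _ => (0:ℝ)) := by
    filter_upwards [hV.mem_nhds hη] with ζ hζ
    have hτ0 : τ ζ = 0 := by
      by_contra hne
      exact absurd (hsupp hne).2 (not_le.2 hζ)
    simp [hfun, hτ0]
  have h1 : iteratedFDeriv ℝ n (hfun d θ τ c) η
      = iteratedFDeriv ℝ n (fun _ : EuclideanSpace ℝ (Fin d) => (0:ℝ)) η := by
    rw [← iteratedFDerivWithin_univ, ← iteratedFDerivWithin_univ]
    refine Filter.EventuallyEq.iteratedFDerivWithin_eq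
      (heq.filter_mono nhdsWithin_le_nhds) ?_ n
    have hτ0 : τ η = 0 := by
      by_contra hne
      exact absurd (hsupp hne).2 (not_le.2 hη)
    simp [hfun, hτ0]
  rw [h1, iteratedFDeriv_zero_fun]
  rfl

lemma hfunC_deriv_norm (hθ : 0 < θ) (ha : 0 < a)
    (hτ : ContDiff ℝ (⊤:ℕ∞) τ) (hsupp : Function.support τ ⊆ {ξ | a ≤ ‖ξ‖ ∧ ‖ξ‖ ≤ b})
    (n : ℕ) (η : EuclideanSpace ℝ (Fin d)) :
    ‖iteratedFDeriv ℝ n (hfunC d θ τ c) η‖ = ‖iteratedFDeriv ℝ n (hfun d θ τ c) η‖ := by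
  have h1 : hfunC d θ τ c = (RCLike.ofRealLI (K := ℂ)) ∘ (hfun d θ τ c) := by
    funext ζ
    simp [hfunC, RCLike.ofRealLI]
    rfl
  rw [h1]
  exact (RCLike.ofRealLI (K := ℂ)).norm_iteratedFDeriv_comp_left
    ((hfun_contDiff hθ ha hτ hsupp).contDiffAt (x := η)) (by exact_mod_cast le_top)

lemma hfunC_contDiff (hθ : 0 < θ) (ha : 0 < a)
    (hτ : ContDiff ℝ (⊤:ℕ∞) τ) (hsupp : Function.support τ ⊆ {ξ | a ≤ ‖ξ‖ ∧ ‖ξ‖ ≤ b}) :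
    ContDiff ℝ (⊤:ℕ∞) (hfunC d θ τ c) :=
  Complex.ofRealCLM.contDiff.comp (hfun_contDiff hθ ha hτ hsupp)

end FB
section FB2

variable {d : ℕ} {θ a b : ℝ} {τ : EuclideanSpace ℝ (Fin d) → ℝ} {c : ℝ}

/-- integral of a bounded function vanishing outside a ball -/
lemma aux_integral_bound (φ : EuclideanSpace ℝ (Fin d) → ℝ) (M R : ℝ) (hM : 0 ≤ M)
    (hφ : Integrable φ) (h0 : ∀ x, 0 ≤ φ x) (hb : ∀ x, φ x ≤ M)
    (hv : ∀ x ∉ Metric.closedBall (0:EuclideanSpace ℝ (Fin d)) R, φ x = 0) :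
    ∫ x, φ x ≤ M * (volume (Metric.closedBall (0:EuclideanSpace ℝ (Fin d)) R)).toReal := by
  have hind : Integrable ((Metric.closedBall (0:EuclideanSpace ℝ (Fin d)) R).indicator
      (fun _ => M)) := by
    apply IntegrableOn.integrable_indicator _ Metric.isClosed_closedBall.measurableSet
    exact integrableOn_const measure_closedBall_lt_top.ne
  have hle : ∀ x, φ x ≤ (Metric.closedBall (0:EuclideanSpace ℝ (Fin d)) R).indicator
      (fun _ => M) x := by
    intro x
    by_cases hx : x ∈ Metric.closedBall (0:EuclideanSpace ℝ (Fin d)) R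
    · rw [Set.indicator_of_mem hx]; exact hb x
    · rw [Set.indicator_of_notMem hx, hv x hx]
  calc ∫ x, φ x ≤ ∫ x, (Metric.closedBall (0:EuclideanSpace ℝ (Fin d)) R).indicator
        (fun _ => M) x := integral_mono hφ hind hle
    _ = M * (volume (Metric.closedBall (0:EuclideanSpace ℝ (Fin d)) R)).toReal := by
        rw [integral_indicator_const _ Metric.isClosed_closedBall.measurableSet]
        simp [mul_comm, Measure.real]

lemma hfunC_deriv_integrable (hθ : 0 < θ) (ha : 0 < a)
    (hτ : ContDiff ℝ (⊤:ℕ∞) τ) (hsupp : Function.support τ ⊆ {ξ | a ≤ ‖ξ‖ ∧ ‖ξ‖ ≤ b})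
    (n : ℕ) : Integrable (fun v => ‖iteratedFDeriv ℝ n (hfunC d θ τ c) v‖) := by
  have hcont : Continuous (fun v => ‖iteratedFDeriv ℝ n (hfunC d θ τ c) v‖) :=
    ((hfunC_contDiff hθ ha hτ hsupp).continuous_iteratedFDeriv
      (by exact_mod_cast le_top)).norm
  have hcs : HasCompactSupport (fun v => ‖iteratedFDeriv ℝ n (hfunC d θ τ c) v‖) := by
    apply HasCompactSupport.intro (isCompact_closedBall (0:EuclideanSpace ℝ (Fin d)) b)
    intro η hη
    rw [norm_eq_zero]
    have h1 := hfunC_deriv_norm (c := c) hθ ha hτ hsupp n η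
    rw [← norm_eq_zero, h1, norm_eq_zero]
    exact hfun_vanish ha hsupp n η hη
  exact hcont.integrable_of_hasCompactSupport hcs

/-- The uniform Fourier decay bound. -/
lemma aux_fourier_bound (hd : 1 ≤ d) (hθ : 0 < θ) (ha : 0 < a) (hab : a < b)
    (hτ : ContDiff ℝ (⊤:ℕ∞) τ) (hsupp : Function.support τ ⊆ {ξ | a ≤ ‖ξ‖ ∧ ‖ξ‖ ≤ b}) :
    ∃ M : ℝ, 0 < M ∧ ∀ c : ℝ, 1 ≤ c → ∀ w : EuclideanSpace ℝ (Fin d),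
      (1 + ‖w‖ ^ (d+1)) * ‖𝓕 (hfunC d θ τ c) w‖ ≤ M := by
  -- uniform bound on all derivatives up to order d+1
  have hM : ∀ i : ℕ, ∃ M : ℝ, 0 ≤ M ∧ ∀ c : ℝ, 1 ≤ c → ∀ η : EuclideanSpace ℝ (Fin d),
      ‖iteratedFDeriv ℝ i (hfun d θ τ c) η‖ ≤ M :=
    fun i => aux_h_bound d θ a b hθ ha hab τ hτ hsupp i
  choose Mf hMf0 hMf using hM
  obtain ⟨M₀, hM₀0, hM₀⟩ := aux_exists_bound Mf (d+1)
  set vol : ℝ := (volume (Metric.closedBall (0:EuclideanSpace ℝ (Fin d)) b)).toReal with hvol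
  have hvol0 : 0 ≤ vol := ENNReal.toReal_nonneg
  set Mv : ℝ := M₀ * vol with hMv
  have hMv0 : 0 ≤ Mv := mul_nonneg hM₀0 hvol0
  -- integral bounds
  have hint : ∀ (c : ℝ), 1 ≤ c → ∀ i ≤ d+1,
      (∫ v : EuclideanSpace ℝ (Fin d), ‖iteratedFDeriv ℝ i (hfunC d θ τ c) v‖) ≤ Mv := by
    intro c hc i hi
    apply aux_integral_bound _ M₀ b hM₀0 (hfunC_deriv_integrable hθ ha hτ hsupp i)
      (fun x => norm_nonneg _)
    · intro x
      rw [hfunC_deriv_norm hθ ha hτ hsupp]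
      exact le_trans (hMf i c hc x) (hM₀ i hi)
    · intro x hx
      rw [hfunC_deriv_norm hθ ha hτ hsupp, hfun_vanish ha hsupp i x hx, norm_zero]
  -- integrability hypothesis for the Fourier lemma
  have h'f : ∀ (c : ℝ), ∀ (k n : ℕ), (k:ℕ∞) ≤ (0:ℕ∞) → (n:ℕ∞) ≤ (⊤:ℕ∞) →
      Integrable (fun v : EuclideanSpace ℝ (Fin d) =>
        ‖v‖ ^ k * ‖iteratedFDeriv ℝ n (hfunC d θ τ c) v‖) := by
    intro c k n hk _
    have hk0 : k = 0 := by exact_mod_cast Nat.le_zero.1 (by exact_mod_cast hk)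
    subst hk0
    simpa using hfunC_deriv_integrable (c := c) hθ ha hτ hsupp n
  refine ⟨Mv + 2 ^ (d+1) * ((d+2) * Mv) + 1, by positivity, ?_⟩
  intro c hc w
  have hcd : ContDiff ℝ (⊤:ℕ∞) (hfunC d θ τ c) := hfunC_contDiff hθ ha hτ hsupp
  -- the zero-order bound
  have h0 := Real.pow_mul_norm_iteratedFDeriv_fourier_le (K := 0) (N := ⊤)
    hcd (h'f c) (le_refl (0:ℕ∞)) (le_top) w (k := 0) (n := 0)
  have h1 := Real.pow_mul_norm_iteratedFDeriv_fourier_le (K := 0) (N := ⊤)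
    hcd (h'f c) (le_refl (0:ℕ∞)) (le_top) w (k := 0) (n := d+1)
  simp only [norm_iteratedFDeriv_zero, pow_zero, one_mul, Nat.cast_zero, mul_zero,
    zero_add] at h0 h1
  have hS : ∀ n : ℕ, n ≤ d + 1 →
      (∑ p ∈ Finset.range (0+1) ×ˢ Finset.range (n+1),
        ∫ v : EuclideanSpace ℝ (Fin d), ‖v‖ ^ p.1 * ‖iteratedFDeriv ℝ p.2 (hfunC d θ τ c) v‖)
        ≤ ((n:ℝ) + 1) * Mv := by
    intro n hn
    have hcard : (Finset.range (0+1) ×ˢ Finset.range (n+1)).card = n + 1 := by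
      rw [Finset.card_product, Finset.card_range, Finset.card_range]
      omega
    have hterm : ∀ p ∈ Finset.range (0+1) ×ˢ Finset.range (n+1),
        (∫ v : EuclideanSpace ℝ (Fin d), ‖v‖ ^ p.1 * ‖iteratedFDeriv ℝ p.2 (hfunC d θ τ c) v‖)
        ≤ Mv := by
      intro p hp
      rw [Finset.mem_product, Finset.mem_range, Finset.mem_range] at hp
      have hp1 : p.1 = 0 := Nat.lt_one_iff.1 hp.1
      have heq : (fun v : EuclideanSpace ℝ (Fin d) =>
          ‖v‖ ^ p.1 * ‖iteratedFDeriv ℝ p.2 (hfunC d θ τ c) v‖)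
          = fun v => ‖iteratedFDeriv ℝ p.2 (hfunC d θ τ c) v‖ := by
        funext v; rw [hp1, pow_zero, one_mul]
      rw [heq]
      exact hint c hc p.2 (by omega)
    refine le_trans (Finset.sum_le_card_nsmul _ _ Mv hterm) ?_
    rw [hcard, nsmul_eq_mul]
    push_cast
    exact le_rfl
  have hfin : (1 + ‖w‖ ^ (d+1)) * ‖𝓕 (hfunC d θ τ c) w‖
      = ‖𝓕 (hfunC d θ τ c) w‖ + ‖w‖ ^ (d+1) * ‖𝓕 (hfunC d θ τ c) w‖ := by ring
  rw [hfin]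
  have hb1 : ‖𝓕 (hfunC d θ τ c) w‖ ≤ Mv := by
    have := le_trans h0 (hS 0 (by omega))
    simpa using this
  have hb2 : ‖w‖ ^ (d+1) * ‖𝓕 (hfunC d θ τ c) w‖ ≤ 2 ^ (d+1) * ((↑d + 2) * Mv) := by
    refine le_trans h1 ?_
    have h2 := hS (d+1) le_rfl
    have h3 : ((((d+1):ℕ):ℝ) + 1) * Mv = ((d:ℝ) + 2) * Mv := by push_cast; ring
    rw [h3] at h2
    exact mul_le_mul_of_nonneg_left h2 (by positivity)
  calc ‖𝓕 (hfunC d θ τ c) w‖ + ‖w‖ ^ (d+1) * ‖𝓕 (hfunC d θ τ c) w‖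
      ≤ Mv + 2 ^ (d+1) * ((↑d + 2) * Mv) := add_le_add hb1 hb2
    _ ≤ Mv + 2 ^ (d+1) * ((↑d + 2) * Mv) + 1 := by linarith

end FB2

-- from t9.lean




lemma aux_cov (d : ℕ) (θ : ℝ) (τ : EuclideanSpace ℝ (Fin d) → ℝ)
    (j : ℕ) (x : EuclideanSpace ℝ (Fin d)) :
    (∫ ξ : EuclideanSpace ℝ (Fin d),
        ((τ ((2 : ℝ) ^ (-(j : ℤ)) • ξ) : ℝ) : ℂ) * ((‖ξ‖ ^ (-θ) : ℝ) : ℂ) *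
          ((Real.exp (-((2 * Real.pi * ‖ξ‖) ^ θ)) - 1 : ℝ) : ℂ) *
          Complex.exp (-(2 * Real.pi * Complex.I * ((inner ℝ x ξ : ℝ) : ℂ))))
      = ((((2:ℝ)^j)^d * ((2:ℝ)^j) ^ (-θ) : ℝ)) •
        𝓕 (hfunC d θ τ ((2 * Real.pi * (2:ℝ)^j) ^ θ)) ((2:ℝ)^j • x) := by
  set R : ℝ := (2:ℝ)^j with hR_def
  have hR : 0 < R := by positivity
  set c : ℝ := (2 * Real.pi * R) ^ θ with hc_def
  set Φ : EuclideanSpace ℝ (Fin d) → ℂ := fun ξ =>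
      ((τ ((2 : ℝ) ^ (-(j : ℤ)) • ξ) : ℝ) : ℂ) * ((‖ξ‖ ^ (-θ) : ℝ) : ℂ) *
        ((Real.exp (-((2 * Real.pi * ‖ξ‖) ^ θ)) - 1 : ℝ) : ℂ) *
        Complex.exp (-(2 * Real.pi * Complex.I * ((inner ℝ x ξ : ℝ) : ℂ))) with hΦ_def
  have h1 : ∫ η, Φ (R • η) = |(R ^ d)⁻¹| • ∫ ξ, Φ ξ := by
    have := Measure.integral_comp_smul volume Φ R
    rwa [finrank_euclideanSpace_fin] at this
  have habs : |(R ^ d)⁻¹| = (R ^ d)⁻¹ := abs_of_pos (by positivity)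
  have h2 : (R ^ d : ℝ) • (∫ η, Φ (R • η)) = ∫ ξ, Φ ξ := by
    rw [h1, habs, smul_smul, mul_inv_cancel₀ (by positivity), one_smul]
  have hpt : ∀ η : EuclideanSpace ℝ (Fin d), Φ (R • η)
      = (R ^ (-θ) : ℝ) • (Complex.exp (((-2 * Real.pi * (inner ℝ η (R • x) : ℝ) : ℝ) : ℂ)
          * Complex.I) • hfunC d θ τ c η) := by
    intro η
    have hnn : (0:ℝ) ≤ ‖η‖ := norm_nonneg η
    have hsm : (2:ℝ) ^ (-(j:ℤ)) • (R • η) = η := by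
      rw [smul_smul]
      have : (2:ℝ) ^ (-(j:ℤ)) = R⁻¹ := by
        rw [zpow_neg, zpow_natCast, hR_def]
      rw [this, inv_mul_cancel₀ (ne_of_gt hR), one_smul]
    have hns : ‖R • η‖ = R * ‖η‖ := by
      rw [norm_smul, Real.norm_eq_abs, abs_of_pos hR]
    have hrp1 : ‖R • η‖ ^ (-θ) = R ^ (-θ) * ‖η‖ ^ (-θ) := by
      rw [hns, Real.mul_rpow hR.le hnn]
    have hrp2 : (2 * Real.pi * ‖R • η‖) ^ θ = c * ‖η‖ ^ θ := by
      rw [hns, show 2 * Real.pi * (R * ‖η‖) = (2 * Real.pi * R) * ‖η‖ by ring,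
        Real.mul_rpow (by positivity) hnn]
    have hsq1 : (sqfun d η) ^ (-θ/2) = ‖η‖ ^ (-θ) := by
      rw [sqfun_eq, ← Real.rpow_natCast ‖η‖ 2, ← Real.rpow_mul hnn]
      congr 1; ring
    have hsq2 : (sqfun d η) ^ (θ/2) = ‖η‖ ^ θ := by
      rw [sqfun_eq, ← Real.rpow_natCast ‖η‖ 2, ← Real.rpow_mul hnn]
      congr 1; ring
    have hip : (inner ℝ x (R • η) : ℝ) = (inner ℝ η (R • x) : ℝ) := by
      rw [real_inner_smul_right, real_inner_smul_right, real_inner_comm]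
    simp only [hΦ_def, hfunC, hfun]
    rw [hsm, hrp1, hrp2, hsq1, hsq2, hip]
    have hexp : -(2 * Real.pi * Complex.I * ((inner ℝ η (R • x) : ℝ) : ℂ))
        = ((-2 * Real.pi * (inner ℝ η (R • x) : ℝ) : ℝ) : ℂ) * Complex.I := by
      push_cast; ring
    rw [hexp]
    simp only [smul_eq_mul, Complex.real_smul]
    push_cast
    ring
  have h3 : ∫ η, Φ (R • η) = (R ^ (-θ) : ℝ) • 𝓕 (hfunC d θ τ c) (R • x) := by
    rw [Real.fourier_eq', ← integral_smul]
    congr 1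
    funext η
    exact hpt η
  calc (∫ ξ, Φ ξ) = (R ^ d : ℝ) • (∫ η, Φ (R • η)) := h2.symm
    _ = (R ^ d : ℝ) • ((R ^ (-θ) : ℝ) • 𝓕 (hfunC d θ τ c) (R • x)) := by rw [h3]
    _ = ((R ^ d * R ^ (-θ) : ℝ)) • 𝓕 (hfunC d θ τ c) (R • x) := by rw [smul_smul]

-- from t10.lean


lemma aux_phi_integrable (d : ℕ) :
    Integrable (fun y : EuclideanSpace ℝ (Fin d) => (1 + ‖y‖ ^ (d+1))⁻¹) := by
  have hnr : ((Module.finrank ℝ (EuclideanSpace ℝ (Fin d)) : ℝ)) < ((d+1:ℕ):ℝ) := by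
    rw [finrank_euclideanSpace_fin]
    exact_mod_cast lt_add_one d
  have hint := (integrable_one_add_norm (μ := (volume : Measure (EuclideanSpace ℝ (Fin d)))) hnr).const_mul ((2:ℝ)^(d+1))
  apply hint.mono'
  · apply Continuous.aestronglyMeasurable
    apply Continuous.inv₀ (continuous_const.add (continuous_norm.pow _))
    intro y
    show (1:ℝ) + ‖y‖ ^ (d+1) ≠ 0
    positivity
  · filter_upwards with y
    have ht : (0:ℝ) ≤ ‖y‖ := norm_nonneg y
    have key : (1 + ‖y‖) ^ (d+1) ≤ 2^(d+1) * (1 + ‖y‖^(d+1)) := by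
      have h1 : 1 + ‖y‖ ≤ 2 * max 1 ‖y‖ := by
        rcases le_total ‖y‖ 1 with h | h
        · calc 1 + ‖y‖ ≤ 1 + 1 := by linarith
            _ = 2 * 1 := by ring
            _ ≤ 2 * max 1 ‖y‖ := by
                apply mul_le_mul_of_nonneg_left (le_max_left _ _) (by norm_num)
        · calc 1 + ‖y‖ ≤ ‖y‖ + ‖y‖ := by linarith
            _ = 2 * ‖y‖ := by ring
            _ ≤ 2 * max 1 ‖y‖ := by
                apply mul_le_mul_of_nonneg_left (le_max_right _ _) (by norm_num)
      have h2 : (max 1 ‖y‖)^(d+1) ≤ 1 + ‖y‖^(d+1) := by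
        rcases le_total ‖y‖ 1 with h | h
        · rw [max_eq_left h]
          simp only [one_pow]
          have : (0:ℝ) ≤ ‖y‖^(d+1) := by positivity
          linarith
        · rw [max_eq_right h]
          have : (0:ℝ) ≤ 1 := zero_le_one
          linarith
      calc (1 + ‖y‖)^(d+1) ≤ (2 * max 1 ‖y‖)^(d+1) := by
            apply pow_le_pow_left₀ (by positivity) h1
        _ = 2^(d+1) * (max 1 ‖y‖)^(d+1) := mul_pow _ _ _
        _ ≤ 2^(d+1) * (1 + ‖y‖^(d+1)) := by
            apply mul_le_mul_of_nonneg_left h2 (by positivity)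
    have hpos1 : (0:ℝ) < 1 + ‖y‖^(d+1) := by positivity
    have hpos2 : (0:ℝ) < (1 + ‖y‖)^(d+1) := by positivity
    rw [Real.norm_eq_abs, abs_of_pos (by positivity : (0:ℝ) < (1 + ‖y‖^(d+1))⁻¹)]
    have hrw : (1 + ‖y‖) ^ (-((d+1:ℕ):ℝ)) = ((1 + ‖y‖)^(d+1))⁻¹ := by
      rw [Real.rpow_neg (by positivity), Real.rpow_natCast]
    rw [hrw, ← div_eq_mul_inv, le_div_iff₀ hpos2, inv_mul_eq_div, div_le_iff₀ hpos1]
    calc (1 + ‖y‖)^(d+1) ≤ 2^(d+1) * (1 + ‖y‖^(d+1)) := key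
end auxsection

/-- Let `d ≥ 1`, `θ > 0`, and let `τ : ℝ^d → ℝ` be smooth with support contained in an
annulus `{a ≤ |ξ| ≤ b}` with `0 < a < b`.  For `j ∈ ℕ` let
`F_j(x) = ∫ τ(2^{−j}ξ) |ξ|^{−θ} (exp(−|2πξ|^θ) − 1) exp(−2π√−1 x·ξ) dξ`.
Then `|F_j(x)| ≤ C · 2^{j(d−θ)} / (1 + (2^j|x|)^{d+1})` uniformly in `j, x`, and in
particular `∫ |F_j| ≤ C′ · 2^{−jθ}` uniformly in `j`. -/
theorem kernel_bound_annulus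
    (d : ℕ) (hd : 1 ≤ d) (θ : ℝ) (hθ : 0 < θ)
    (τ : EuclideanSpace ℝ (Fin d) → ℝ) (hτ : ContDiff ℝ (⊤ : ℕ∞) τ)
    (a b : ℝ) (ha : 0 < a) (hab : a < b)
    (hsupp : Function.support τ ⊆ {ξ | a ≤ ‖ξ‖ ∧ ‖ξ‖ ≤ b})
    (F : ℕ → EuclideanSpace ℝ (Fin d) → ℂ)
    (hF : ∀ (j : ℕ) (x : EuclideanSpace ℝ (Fin d)),
      F j x = ∫ ξ : EuclideanSpace ℝ (Fin d),
        ((τ ((2 : ℝ) ^ (-(j : ℤ)) • ξ) : ℝ) : ℂ) * ((‖ξ‖ ^ (-θ) : ℝ) : ℂ) *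
          ((Real.exp (-((2 * Real.pi * ‖ξ‖) ^ θ)) - 1 : ℝ) : ℂ) *
          Complex.exp (-(2 * Real.pi * Complex.I * ((inner ℝ x ξ : ℝ) : ℂ)))) :
    (∃ C > 0, ∀ (j : ℕ) (x : EuclideanSpace ℝ (Fin d)),
        ‖F j x‖ ≤ C * (2 : ℝ) ^ ((j : ℝ) * ((d : ℝ) - θ)) /
          (1 + ((2 : ℝ) ^ j * ‖x‖) ^ (d + 1))) ∧
    (∃ C' > 0, ∀ j : ℕ,
        (∫ x : EuclideanSpace ℝ (Fin d), ‖F j x‖) ≤ C' * (2 : ℝ) ^ (-(j : ℝ) * θ)) := by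
  have hτ' : ContDiff ℝ (⊤:ℕ∞) τ := hτ.of_le (by simp)
  obtain ⟨M, hM0, hMb⟩ := aux_fourier_bound hd hθ ha hab hτ' hsupp
  -- scale facts
  have hc1 : ∀ j : ℕ, (1:ℝ) ≤ (2 * Real.pi * (2:ℝ)^j) ^ θ := by
    intro j
    rw [show (1:ℝ) = 1 ^ θ from (Real.one_rpow θ).symm]
    apply Real.rpow_le_rpow zero_le_one _ hθ.le
    have h1 : (1:ℝ) ≤ (2:ℝ)^j := one_le_pow₀ one_le_two
    nlinarith [Real.pi_gt_three]
  have hsc : ∀ j : ℕ, ((2:ℝ)^j)^d * ((2:ℝ)^j) ^ (-θ)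
      = (2 : ℝ) ^ ((j : ℝ) * ((d : ℝ) - θ)) := by
    intro j
    have h1 : ((2:ℝ)^j : ℝ) = (2:ℝ) ^ ((j:ℕ):ℝ) := (Real.rpow_natCast 2 j).symm
    rw [h1, ← Real.rpow_natCast ((2:ℝ) ^ ((j:ℕ):ℝ)) d, ← Real.rpow_mul (by norm_num),
      ← Real.rpow_mul (by norm_num), ← Real.rpow_add (by norm_num)]
    congr 1
    ring
  -- pointwise bound
  have P1 : ∀ (j : ℕ) (x : EuclideanSpace ℝ (Fin d)),
      ‖F j x‖ ≤ M * (2 : ℝ) ^ ((j : ℝ) * ((d : ℝ) - θ)) /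
        (1 + ((2 : ℝ) ^ j * ‖x‖) ^ (d + 1)) := by
    intro j x
    rw [hF j x, aux_cov d θ τ j x]
    set R : ℝ := (2:ℝ)^j with hR_def
    have hR : 0 < R := by positivity
    set c : ℝ := (2 * Real.pi * R) ^ θ with hc_def
    have hden : 0 < 1 + (R * ‖x‖) ^ (d+1) := by positivity
    have hnsx : ‖R • x‖ = R * ‖x‖ := by
      rw [norm_smul, Real.norm_eq_abs, abs_of_pos hR]
    have hw := hMb c (hc1 j) (R • x)
    rw [hnsx] at hw
    have hFb : ‖FourierTransform.fourier (hfunC d θ τ c) (R • x)‖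
        ≤ M / (1 + (R * ‖x‖) ^ (d+1)) := by
      rw [le_div_iff₀ hden]
      calc ‖FourierTransform.fourier (hfunC d θ τ c) (R • x)‖ * (1 + (R * ‖x‖) ^ (d+1))
          = (1 + (R * ‖x‖) ^ (d+1)) * ‖FourierTransform.fourier (hfunC d θ τ c) (R • x)‖ := by ring
        _ ≤ M := hw
    have hpos : (0:ℝ) < R^d * R ^ (-θ) := by
      have : (0:ℝ) < R ^ (-θ) := Real.rpow_pos_of_pos hR _
      positivity
    rw [norm_smul, Real.norm_eq_abs, abs_of_pos hpos]
    calc (R^d * R ^ (-θ)) * ‖FourierTransform.fourier (hfunC d θ τ c) (R • x)‖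
        ≤ (R^d * R ^ (-θ)) * (M / (1 + (R * ‖x‖) ^ (d+1))) := by
          exact mul_le_mul_of_nonneg_left hFb hpos.le
      _ = (R^d * R ^ (-θ)) * M / (1 + (R * ‖x‖) ^ (d+1)) := by ring
      _ = M * (2 : ℝ) ^ ((j : ℝ) * ((d : ℝ) - θ)) / (1 + (R * ‖x‖) ^ (d+1)) := by
          rw [hsc j]; ring_nf
  refine ⟨⟨M, hM0, P1⟩, ?_⟩
  -- integrated bound
  have hφint := aux_phi_integrable d
  set Iφ : ℝ := ∫ y : EuclideanSpace ℝ (Fin d), (1 + ‖y‖ ^ (d+1))⁻¹ with hIφ_def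
  have hIφ0 : 0 ≤ Iφ := integral_nonneg (fun y => by positivity)
  refine ⟨M * Iφ + 1, by positivity, ?_⟩
  intro j
  set R : ℝ := (2:ℝ)^j with hR_def
  have hR : 0 < R := by positivity
  set A : ℝ := M * (2 : ℝ) ^ ((j : ℝ) * ((d : ℝ) - θ)) with hA_def
  have hA0 : 0 ≤ A := by
    apply mul_nonneg hM0.le (Real.rpow_nonneg (by norm_num) _)
  have hb_int : Integrable (fun x : EuclideanSpace ℝ (Fin d) =>
      A * (1 + ‖R • x‖ ^ (d+1))⁻¹) := by
    exact (hφint.comp_smul (ne_of_gt hR)).const_mul A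
  have hpt : ∀ x : EuclideanSpace ℝ (Fin d),
      ‖F j x‖ ≤ A * (1 + ‖R • x‖ ^ (d+1))⁻¹ := by
    intro x
    have hnsx : ‖R • x‖ = R * ‖x‖ := by
      rw [norm_smul, Real.norm_eq_abs, abs_of_pos hR]
    rw [hnsx]
    calc ‖F j x‖ ≤ A / (1 + (R * ‖x‖) ^ (d+1)) := P1 j x
      _ = A * (1 + (R * ‖x‖) ^ (d+1))⁻¹ := div_eq_mul_inv _ _
  have hI : (∫ x : EuclideanSpace ℝ (Fin d), ‖F j x‖)
      ≤ ∫ x : EuclideanSpace ℝ (Fin d), A * (1 + ‖R • x‖ ^ (d+1))⁻¹ := by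
    apply integral_mono_of_nonneg (Filter.Eventually.of_forall (fun x => norm_nonneg _))
      hb_int (Filter.Eventually.of_forall hpt)
  have hIeq : (∫ x : EuclideanSpace ℝ (Fin d), A * (1 + ‖R • x‖ ^ (d+1))⁻¹)
      = A * ((R^d)⁻¹ * Iφ) := by
    rw [integral_const_mul]
    congr 1
    have hcov := Measure.integral_comp_smul (volume : Measure (EuclideanSpace ℝ (Fin d)))
      (fun y => (1 + ‖y‖ ^ (d+1))⁻¹) R
    rw [finrank_euclideanSpace_fin] at hcov
    rw [hcov, abs_of_pos (by positivity : (0:ℝ) < (R^d)⁻¹), smul_eq_mul]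
  have hsc2 : (2 : ℝ) ^ ((j : ℝ) * ((d : ℝ) - θ)) * (R^d)⁻¹ = (2:ℝ) ^ (-(j:ℝ) * θ) := by
    have h1 : ((2:ℝ)^j : ℝ) = (2:ℝ) ^ ((j:ℕ):ℝ) := (Real.rpow_natCast 2 j).symm
    rw [hR_def, h1, ← Real.rpow_natCast ((2:ℝ) ^ ((j:ℕ):ℝ)) d, ← Real.rpow_mul (by norm_num),
      ← Real.rpow_neg (by norm_num), ← Real.rpow_add (by norm_num)]
    congr 1
    ring
  calc (∫ x : EuclideanSpace ℝ (Fin d), ‖F j x‖)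
      ≤ A * ((R^d)⁻¹ * Iφ) := le_trans hI (le_of_eq hIeq)
    _ = (M * Iφ) * ((2 : ℝ) ^ ((j : ℝ) * ((d : ℝ) - θ)) * (R^d)⁻¹) := by rw [hA_def]; ring
    _ = (M * Iφ) * (2:ℝ) ^ (-(j:ℝ) * θ) := by rw [hsc2]
    _ ≤ (M * Iφ + 1) * (2:ℝ) ^ (-(j:ℝ) * θ) := by
        apply mul_le_mul_of_nonneg_right (by linarith) (Real.rpow_nonneg (by norm_num) _)

end
end

section
/- Let d ≥ 1, let {ρ_j}_{j≥−1} be a dyadic partition of unity on ℝ^d, and set ψ°(k,l) = Σ_{j,j'≥−1, |j−j'|≤1} ρ_j(k) ρ_{j'}(l) for k, l ∈ ℝ^d. Then for every λ ∈ [0,1) and every i ∈ {1,…,d} there exists a constant C, depending only on d, λ, i and the dyadic partition, such that for all k = (k^1,…,k^d), l ∈ ℝ^d: (a) |∂ψ°/∂k^i (k,l)| ≤ C · (1+|l|)^{−1+λ}, and (b) if ∂ψ°/∂k^i (k,l) ≠ 0 then C^{−1}(1+|l|) ≤ 1+|k| ≤ C(1+|l|). -/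
open MeasureTheory Real Function Set

noncomputable section

/-- A dyadic partition of unity `{ρ_j}_{j ≥ -1}` on `ℝ^d`; the Lean index `j : ℕ`
corresponds to the usual index `j - 1` (so `ρ 0` is `ρ_{-1}` and `ρ 1` is `ρ_0`). -/
structure DyadicPartition (d : ℕ) where
  ρ : ℕ → EuclideanSpace ℝ (Fin d) → ℝ
  smooth : ∀ j, ContDiff ℝ (⊤ : ℕ∞) (ρ j)
  radial : ∀ j x y, ‖x‖ = ‖y‖ → ρ j x = ρ j y
  mem_Icc : ∀ j x, ρ j x ∈ Set.Icc (0 : ℝ) 1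
  supp_neg_one : Function.support (ρ 0) ⊆ {x | ‖x‖ < 4 / 3}
  supp_zero : Function.support (ρ 1) ⊆ {x | 3 / 4 < ‖x‖ ∧ ‖x‖ < 8 / 3}
  scaling : ∀ (n : ℕ) (x : EuclideanSpace ℝ (Fin d)),
    ρ (n + 1) x = ρ 1 ((2 : ℝ) ^ (-(n : ℤ)) • x)
  sum_one : ∀ x, ∑' j, ρ j x = 1

/-- `ψ°(k,l) = Σ_{j,j' ≥ -1, |j-j'| ≤ 1} ρ_j(k) ρ_{j'}(l)`. -/
def psiCirc {d : ℕ} (P : DyadicPartition d) (k l : EuclideanSpace ℝ (Fin d)) : ℝ :=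
  ∑' p : ℕ × ℕ,
    if p.1 ≤ p.2 + 1 ∧ p.2 ≤ p.1 + 1 then P.ρ p.1 k * P.ρ p.2 l else 0

namespace DyadicPartition
variable {d : ℕ} (P : DyadicPartition d)

lemma norm_bound_succ {m : ℕ} {x : EuclideanSpace ℝ (Fin d)} (h : P.ρ (m+1) x ≠ 0) :
    3/4 * 2^m < ‖x‖ ∧ ‖x‖ < 8/3 * 2^m := by
  rw [P.scaling] at h
  have hc : (2:ℝ) ^ (-(m:ℤ)) = ((2:ℝ)^m)⁻¹ := by rw [zpow_neg, zpow_natCast]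
  have h2m : (0:ℝ) < 2^m := by positivity
  have hmem := P.supp_zero (h : ((2:ℝ) ^ (-(m:ℤ)) • x) ∈ Function.support (P.ρ 1))
  rw [Set.mem_setOf_eq, norm_smul, Real.norm_eq_abs, hc,
    abs_of_pos (by positivity : (0:ℝ) < ((2:ℝ)^m)⁻¹)] at hmem
  obtain ⟨h1, h2⟩ := hmem
  constructor
  · have h1' : 3 / 4 < ‖x‖ / 2^m := (inv_mul_eq_div ((2:ℝ)^m) ‖x‖) ▸ h1
    exact (lt_div_iff₀ h2m).1 h1'
  · have h2' : ‖x‖ / 2^m < 8 / 3 := (inv_mul_eq_div ((2:ℝ)^m) ‖x‖) ▸ h2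
    have := (div_lt_iff₀ h2m).1 h2'
    linarith

lemma supp_bound {j : ℕ} {x : EuclideanSpace ℝ (Fin d)} (h : P.ρ j x ≠ 0) :
    (2:ℝ)^j / 4 ≤ 1 + ‖x‖ ∧ 1 + ‖x‖ ≤ 4 * 2^j := by
  have hx : 0 ≤ ‖x‖ := norm_nonneg x
  match j with
  | 0 =>
    have := P.supp_neg_one (h : x ∈ Function.support (P.ρ 0))
    rw [Set.mem_setOf_eq] at this
    constructor
    · norm_num; linarith
    · norm_num; linarith
  | m + 1 =>
    obtain ⟨h1, h2⟩ := P.norm_bound_succ h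
    have h2m : (1:ℝ) ≤ 2^m := one_le_pow₀ (by norm_num)
    constructor
    · rw [pow_succ]; nlinarith
    · rw [pow_succ]; nlinarith

lemma tsupp_bound {j : ℕ} {x : EuclideanSpace ℝ (Fin d)} (h : x ∈ tsupport (P.ρ j)) :
    (2:ℝ)^j / 4 ≤ 1 + ‖x‖ ∧ 1 + ‖x‖ ≤ 4 * 2^j := by
  have hcl : tsupport (P.ρ j) ⊆ (fun x : EuclideanSpace ℝ (Fin d) => 1 + ‖x‖) ⁻¹'
      Set.Icc ((2:ℝ)^j / 4) (4 * 2^j) := by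
    apply closure_minimal
    · intro y hy
      exact Set.mem_Icc.2 (P.supp_bound hy)
    · exact IsClosed.preimage (continuous_const.add continuous_norm) isClosed_Icc
  exact hcl h

lemma fderiv_succ_apply (m : ℕ) (x v : EuclideanSpace ℝ (Fin d)) :
    fderiv ℝ (P.ρ (m+1)) x v
      = ((2:ℝ)^m)⁻¹ * fderiv ℝ (P.ρ 1) (((2:ℝ)^m)⁻¹ • x) v := by
  have hc : (2:ℝ) ^ (-(m:ℤ)) = ((2:ℝ)^m)⁻¹ := by rw [zpow_neg, zpow_natCast]
  have hfun : P.ρ (m+1) = fun y => P.ρ 1 (((2:ℝ)^m)⁻¹ • y) := by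
    funext y; rw [P.scaling, hc]
  have hinner : HasFDerivAt (fun y : EuclideanSpace ℝ (Fin d) => ((2:ℝ)^m)⁻¹ • y)
      (((2:ℝ)^m)⁻¹ • ContinuousLinearMap.id ℝ (EuclideanSpace ℝ (Fin d))) x :=
    (hasFDerivAt_id (𝕜 := ℝ) x).const_smul (((2:ℝ)^m)⁻¹)
  have houter : HasFDerivAt (P.ρ 1) (fderiv ℝ (P.ρ 1) (((2:ℝ)^m)⁻¹ • x)) (((2:ℝ)^m)⁻¹ • x) :=
    (((P.smooth 1).differentiable (by simp)) _).hasFDerivAt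
  have hcomp := houter.comp x hinner
  have : fderiv ℝ (P.ρ (m+1)) x = (fderiv ℝ (P.ρ 1) (((2:ℝ)^m)⁻¹ • x)).comp
      (((2:ℝ)^m)⁻¹ • ContinuousLinearMap.id ℝ (EuclideanSpace ℝ (Fin d))) := by
    rw [hfun]; exact hcomp.fderiv
  rw [this]
  simp [ContinuousLinearMap.comp_apply, _root_.map_smul, smul_eq_mul]

end DyadicPartition

/-- **Bound for the partial derivative of `ψ°`** (Lemma 7.5(ii)).
For every `λ ∈ [0,1)` and every `i ∈ {1,…,d}` there is `C > 0` such that for all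
`k, l ∈ ℝ^d`:
(a) `|∂ψ°/∂k^i (k,l)| ≤ C (1+|l|)^{−1+λ}`, and
(b) if `∂ψ°/∂k^i (k,l) ≠ 0` then `C⁻¹(1+|l|) ≤ 1+|k| ≤ C(1+|l|)`. -/

theorem psiCirc_deriv_bound
    (d : ℕ) (hd : 1 ≤ d) (P : DyadicPartition d)
    (lam : ℝ) (hlam0 : 0 ≤ lam) (hlam1 : lam < 1) (i : Fin d) :
    ∃ C > 0, ∀ k l : EuclideanSpace ℝ (Fin d),
      (|fderiv ℝ (fun k' => psiCirc P k' l) k (EuclideanSpace.single i 1)| ≤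
          C * (1 + ‖l‖) ^ (-1 + lam)) ∧
      (fderiv ℝ (fun k' => psiCirc P k' l) k (EuclideanSpace.single i 1) ≠ 0 →
        C⁻¹ * (1 + ‖l‖) ≤ 1 + ‖k‖ ∧ 1 + ‖k‖ ≤ C * (1 + ‖l‖)) := by
  classical
  -- compact support of ρ 0 and ρ 1
  have hcs0 : HasCompactSupport (P.ρ 0) := by
    apply HasCompactSupport.intro (isCompact_closedBall (0 : EuclideanSpace ℝ (Fin d)) (8/3))
    intro x hx
    by_contra h
    have := P.supp_neg_one (h : x ∈ Function.support (P.ρ 0))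
    rw [Set.mem_setOf_eq] at this
    exact hx (Metric.mem_closedBall.2 (by rw [dist_zero_right]; linarith))
  have hcs1 : HasCompactSupport (P.ρ 1) := by
    apply HasCompactSupport.intro (isCompact_closedBall (0 : EuclideanSpace ℝ (Fin d)) (8/3))
    intro x hx
    by_contra h
    have := (P.supp_zero (h : x ∈ Function.support (P.ρ 1))).2
    exact hx (Metric.mem_closedBall.2 (by rw [dist_zero_right]; linarith))
  obtain ⟨M0, hM0⟩ := (hcs0.fderiv (𝕜 := ℝ)).exists_bound_of_continuous
    ((P.smooth 0).continuous_fderiv (by simp))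
  obtain ⟨M1, hM1⟩ := (hcs1.fderiv (𝕜 := ℝ)).exists_bound_of_continuous
    ((P.smooth 1).continuous_fderiv (by simp))
  set M : ℝ := max (max 1 M0) (2 * M1) with hMdef
  have hM1le : (1:ℝ) ≤ M := le_trans (le_max_left 1 M0) (le_max_left _ _)
  have hMpos : (0:ℝ) < M := lt_of_lt_of_le one_pos hM1le
  have hv : ‖EuclideanSpace.single i (1:ℝ)‖ = 1 := by
    rw [EuclideanSpace.norm_single]; norm_num
  -- uniform derivative bound
  have hDer : ∀ (j : ℕ) (x : EuclideanSpace ℝ (Fin d)),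
      |fderiv ℝ (P.ρ j) x (EuclideanSpace.single i 1)| ≤ M * ((2:ℝ)^j)⁻¹ := by
    intro j x
    match j with
    | 0 =>
      rw [← Real.norm_eq_abs]
      calc ‖fderiv ℝ (P.ρ 0) x (EuclideanSpace.single i (1:ℝ))‖
          ≤ ‖fderiv ℝ (P.ρ 0) x‖ * ‖EuclideanSpace.single i (1:ℝ)‖ :=
            (fderiv ℝ (P.ρ 0) x).le_opNorm _
        _ ≤ M := by
            rw [hv, mul_one]
            exact le_trans (hM0 x) (le_trans (le_max_right 1 M0) (le_max_left _ _))
        _ = M * ((2:ℝ)^(0:ℕ))⁻¹ := by norm_num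
    | m+1 =>
      have h2m : (0:ℝ) < 2^m := by positivity
      rw [P.fderiv_succ_apply, abs_mul, abs_of_pos (by positivity : (0:ℝ) < ((2:ℝ)^m)⁻¹),
        ← Real.norm_eq_abs]
      have hb : ‖fderiv ℝ (P.ρ 1) (((2:ℝ)^m)⁻¹ • x) (EuclideanSpace.single i (1:ℝ))‖ ≤ M1 := by
        calc ‖fderiv ℝ (P.ρ 1) (((2:ℝ)^m)⁻¹ • x) (EuclideanSpace.single i (1:ℝ))‖
            ≤ ‖fderiv ℝ (P.ρ 1) (((2:ℝ)^m)⁻¹ • x)‖ * ‖EuclideanSpace.single i (1:ℝ)‖ :=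
              (fderiv ℝ (P.ρ 1) _).le_opNorm _
          _ ≤ M1 := by rw [hv, mul_one]; exact hM1 _
      have h2M1 : 2 * M1 ≤ M := le_max_right _ _
      calc ((2:ℝ)^m)⁻¹ * ‖fderiv ℝ (P.ρ 1) (((2:ℝ)^m)⁻¹ • x) (EuclideanSpace.single i (1:ℝ))‖
          ≤ ((2:ℝ)^m)⁻¹ * (M * 2⁻¹) := by
            apply mul_le_mul_of_nonneg_left _ (by positivity)
            linarith
        _ = M * ((2:ℝ)^(m+1))⁻¹ := by rw [pow_succ, mul_inv]; ring
  refine ⟨max (24 * M) 32, lt_of_lt_of_le (by norm_num) (le_max_right _ _), fun k l => ?_⟩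
  have hl0 : (0:ℝ) < 1 + ‖l‖ := by positivity
  obtain ⟨n, hn⟩ : ∃ n : ℕ, ‖l‖ < 2 ^ n := pow_unbounded_of_one_lt ‖l‖ one_lt_two
  have hρl : ∀ j, n + 2 ≤ j → P.ρ j l = 0 := by
    intro j hj
    match j, hj with
    | m+1, hj =>
      by_contra h
      obtain ⟨h1, _⟩ := P.norm_bound_succ h
      have hle : (2:ℝ)^(n+1) ≤ 2^m := pow_le_pow_right₀ one_le_two (by omega)
      rw [pow_succ] at hle
      have h2n : (0:ℝ) < 2^n := by positivity
      linarith
  set T : Finset (ℕ × ℕ) := Finset.range (n+3) ×ˢ Finset.range (n+2) with hT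
  have hvan : ∀ (k' : EuclideanSpace ℝ (Fin d)), ∀ p ∉ T,
      (if p.1 ≤ p.2 + 1 ∧ p.2 ≤ p.1 + 1 then P.ρ p.1 k' * P.ρ p.2 l else 0) = 0 := by
    intro k' p hp
    by_cases hc : p.1 ≤ p.2 + 1 ∧ p.2 ≤ p.1 + 1
    · rw [hT, Finset.mem_product] at hp
      simp only [Finset.mem_range, not_and_or, not_lt] at hp
      rcases hp with hp | hp
      · rw [if_pos hc, hρl p.2 (by omega), mul_zero]
      · rw [if_pos hc, hρl p.2 (by omega), mul_zero]
    · rw [if_neg hc]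
  have hrepr : (fun k' => psiCirc P k' l) = fun k' =>
      ∑ p ∈ T, (if p.1 ≤ p.2 + 1 ∧ p.2 ≤ p.1 + 1 then P.ρ p.1 k' * P.ρ p.2 l else 0) := by
    funext k'
    exact tsum_eq_sum (hvan k')
  have hHas : HasFDerivAt (fun k' => psiCirc P k' l)
      (∑ p ∈ T, if p.1 ≤ p.2 + 1 ∧ p.2 ≤ p.1 + 1
        then P.ρ p.2 l • fderiv ℝ (P.ρ p.1) k else 0) k := by
    rw [hrepr]
    apply HasFDerivAt.fun_sum
    intro p _
    by_cases hc : p.1 ≤ p.2 + 1 ∧ p.2 ≤ p.1 + 1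
    · simp only [if_pos hc]
      exact ((((P.smooth p.1).differentiable (by simp)) k).hasFDerivAt).mul_const _
    · simp only [if_neg hc]
      exact hasFDerivAt_const 0 k
  have hfd : fderiv ℝ (fun k' => psiCirc P k' l) k (EuclideanSpace.single i 1)
      = ∑ p ∈ T, (if p.1 ≤ p.2 + 1 ∧ p.2 ≤ p.1 + 1
          then P.ρ p.2 l * fderiv ℝ (P.ρ p.1) k (EuclideanSpace.single i 1) else 0) := by
    rw [hHas.fderiv, ContinuousLinearMap.sum_apply]
    refine Finset.sum_congr rfl fun p _ => ?_
    by_cases hc : p.1 ≤ p.2 + 1 ∧ p.2 ≤ p.1 + 1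
    · rw [if_pos hc, if_pos hc, ContinuousLinearMap.smul_apply, smul_eq_mul]
    · rw [if_neg hc, if_neg hc, ContinuousLinearMap.zero_apply]
  constructor
  · -- part (a)
    rw [hfd]
    have hterm : ∀ p ∈ T,
        |if p.1 ≤ p.2 + 1 ∧ p.2 ≤ p.1 + 1
          then P.ρ p.2 l * fderiv ℝ (P.ρ p.1) k (EuclideanSpace.single i 1) else 0|
        ≤ (if p.1 ≤ p.2 + 1 ∧ p.2 ≤ p.1 + 1 then 8 * M / (1 + ‖l‖) * P.ρ p.2 l else 0) := by
      intro p _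
      by_cases hc : p.1 ≤ p.2 + 1 ∧ p.2 ≤ p.1 + 1
      · rw [if_pos hc, if_pos hc]
        by_cases hz : P.ρ p.2 l = 0
        · rw [hz, zero_mul, mul_zero, abs_zero]
        · have hρnn : 0 ≤ P.ρ p.2 l := (P.mem_Icc p.2 l).1
          have hlsup := P.tsupp_bound (subset_closure (Function.mem_support.2 hz))
          have h2p1 : (0:ℝ) < 2^p.1 := by positivity
          have h2le : (2:ℝ)^p.2 ≤ 2 * 2^p.1 := by
            calc (2:ℝ)^p.2 ≤ 2^(p.1+1) := pow_le_pow_right₀ one_le_two hc.2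
              _ = 2 * 2^p.1 := by rw [pow_succ]; ring
          have hup : 1 + ‖l‖ ≤ 8 * 2^p.1 := by linarith [hlsup.2]
          have hder : |fderiv ℝ (P.ρ p.1) k (EuclideanSpace.single i 1)| ≤ 8 * M / (1 + ‖l‖) := by
            refine le_trans (hDer p.1 k) ?_
            rw [le_div_iff₀ hl0]
            have hinv : ((2:ℝ)^p.1)⁻¹ * (2:ℝ)^p.1 = 1 := inv_mul_cancel₀ (ne_of_gt h2p1)
            nlinarith [mul_le_mul_of_nonneg_left hup
              (by positivity : (0:ℝ) ≤ M * ((2:ℝ)^p.1)⁻¹)]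
          calc |P.ρ p.2 l * fderiv ℝ (P.ρ p.1) k (EuclideanSpace.single i 1)|
              = P.ρ p.2 l * |fderiv ℝ (P.ρ p.1) k (EuclideanSpace.single i 1)| := by
                rw [abs_mul, abs_of_nonneg hρnn]
            _ ≤ P.ρ p.2 l * (8 * M / (1 + ‖l‖)) := mul_le_mul_of_nonneg_left hder hρnn
            _ = 8 * M / (1 + ‖l‖) * P.ρ p.2 l := by ring
      · rw [if_neg hc, if_neg hc, abs_zero]
    have hsumρ : ∑ j' ∈ Finset.range (n+2), P.ρ j' l = 1 := by
      rw [← P.sum_one l]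
      exact (tsum_eq_sum (fun j hj => hρl j (by
        rw [Finset.mem_range, not_lt] at hj; exact hj))).symm
    have hbound : ∑ p ∈ T, (if p.1 ≤ p.2 + 1 ∧ p.2 ≤ p.1 + 1
          then 8 * M / (1 + ‖l‖) * P.ρ p.2 l else 0) ≤ 24 * M / (1 + ‖l‖) := by
      rw [hT, Finset.sum_product_right]
      have hinner : ∀ j' ∈ Finset.range (n+2),
          ∑ j ∈ Finset.range (n+3), (if j ≤ j' + 1 ∧ j' ≤ j + 1
            then 8 * M / (1 + ‖l‖) * P.ρ j' l else 0)
          ≤ 3 * (8 * M / (1 + ‖l‖) * P.ρ j' l) := by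
        intro j' _
        rw [Finset.sum_ite, Finset.sum_const_zero, add_zero, Finset.sum_const, nsmul_eq_mul]
        have hcard : ((Finset.range (n+3)).filter (fun j => j ≤ j' + 1 ∧ j' ≤ j + 1)).card ≤ 3 := by
          have hsub : (Finset.range (n+3)).filter (fun j => j ≤ j' + 1 ∧ j' ≤ j + 1)
              ⊆ ({j' - 1, j', j' + 1} : Finset ℕ) := by
            intro j hj
            rw [Finset.mem_filter] at hj
            simp only [Finset.mem_insert, Finset.mem_singleton]
            omega
          refine le_trans (Finset.card_le_card hsub) ?_
          refine le_trans (Finset.card_insert_le _ _) ?_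
          have := Finset.card_insert_le j' ({j' + 1} : Finset ℕ)
          simp only [Finset.card_singleton] at this
          omega
        have hnn : (0:ℝ) ≤ 8 * M / (1 + ‖l‖) * P.ρ j' l := by
          have := (P.mem_Icc j' l).1
          positivity
        apply mul_le_mul_of_nonneg_right _ hnn
        exact_mod_cast hcard
      calc ∑ j' ∈ Finset.range (n+2), ∑ j ∈ Finset.range (n+3),
            (if j ≤ j' + 1 ∧ j' ≤ j + 1 then 8 * M / (1 + ‖l‖) * P.ρ j' l else 0)
          ≤ ∑ j' ∈ Finset.range (n+2), 3 * (8 * M / (1 + ‖l‖) * P.ρ j' l) :=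
            Finset.sum_le_sum hinner
        _ = 24 * M / (1 + ‖l‖) * ∑ j' ∈ Finset.range (n+2), P.ρ j' l := by
            rw [Finset.mul_sum]; exact Finset.sum_congr rfl (fun _ _ => by ring)
        _ = 24 * M / (1 + ‖l‖) := by rw [hsumρ, mul_one]
    have hrpow : (1 + ‖l‖)⁻¹ ≤ (1 + ‖l‖) ^ (-1 + lam) := by
      rw [← Real.rpow_neg_one (1 + ‖l‖)]
      exact Real.rpow_le_rpow_of_exponent_le (by linarith [norm_nonneg l]) (by linarith)
    calc |∑ p ∈ T, (if p.1 ≤ p.2 + 1 ∧ p.2 ≤ p.1 + 1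
            then P.ρ p.2 l * fderiv ℝ (P.ρ p.1) k (EuclideanSpace.single i 1) else 0)|
        ≤ ∑ p ∈ T, |if p.1 ≤ p.2 + 1 ∧ p.2 ≤ p.1 + 1
            then P.ρ p.2 l * fderiv ℝ (P.ρ p.1) k (EuclideanSpace.single i 1) else 0| :=
          Finset.abs_sum_le_sum_abs _ _
      _ ≤ ∑ p ∈ T, (if p.1 ≤ p.2 + 1 ∧ p.2 ≤ p.1 + 1
            then 8 * M / (1 + ‖l‖) * P.ρ p.2 l else 0) := Finset.sum_le_sum hterm
      _ ≤ 24 * M / (1 + ‖l‖) := hbound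
      _ = 24 * M * (1 + ‖l‖)⁻¹ := by rw [div_eq_mul_inv]
      _ ≤ max (24 * M) 32 * (1 + ‖l‖) ^ (-1 + lam) := by
          apply mul_le_mul (le_max_left _ _) hrpow (by positivity)
          exact le_trans (by positivity) (le_max_left _ _)
  · -- part (b)
    intro hD
    rw [hfd] at hD
    obtain ⟨p, hpT, hp⟩ := Finset.exists_ne_zero_of_sum_ne_zero hD
    by_cases hc : p.1 ≤ p.2 + 1 ∧ p.2 ≤ p.1 + 1
    swap
    · rw [if_neg hc] at hp; exact absurd rfl hp
    rw [if_pos hc] at hp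
    have hρ2 : P.ρ p.2 l ≠ 0 := fun h => hp (by rw [h, zero_mul])
    have hfd1 : fderiv ℝ (P.ρ p.1) k (EuclideanSpace.single i 1) ≠ 0 :=
      fun h => hp (by rw [h, mul_zero])
    have hk : k ∈ tsupport (P.ρ p.1) := by
      apply support_fderiv_subset ℝ
      apply Function.mem_support.2
      intro h0
      exact hfd1 (by rw [h0]; rfl)
    obtain ⟨hk1, hk2⟩ := P.tsupp_bound hk
    obtain ⟨hl1, hl2⟩ := P.tsupp_bound (subset_closure (Function.mem_support.2 hρ2))
    have h1 : (2:ℝ)^p.1 ≤ 2 * 2^p.2 := by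
      calc (2:ℝ)^p.1 ≤ 2^(p.2+1) := pow_le_pow_right₀ one_le_two hc.1
        _ = 2 * 2^p.2 := by rw [pow_succ]; ring
    have h2 : (2:ℝ)^p.2 ≤ 2 * 2^p.1 := by
      calc (2:ℝ)^p.2 ≤ 2^(p.1+1) := pow_le_pow_right₀ one_le_two hc.2
        _ = 2 * 2^p.1 := by rw [pow_succ]; ring
    constructor
    · have hC32 : (32:ℝ) ≤ max (24 * M) 32 := le_max_right _ _
      have hCi : (max (24 * M) 32)⁻¹ ≤ 32⁻¹ := inv_anti₀ (by norm_num) hC32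
      have hlk : 1 + ‖l‖ ≤ 32 * (1 + ‖k‖) := by linarith
      calc (max (24 * M) 32)⁻¹ * (1 + ‖l‖) ≤ 32⁻¹ * (1 + ‖l‖) :=
            mul_le_mul_of_nonneg_right hCi (le_of_lt hl0)
        _ ≤ 1 + ‖k‖ := by linarith
    · calc 1 + ‖k‖ ≤ 32 * (1 + ‖l‖) := by linarith
        _ ≤ max (24 * M) 32 * (1 + ‖l‖) :=
            mul_le_mul_of_nonneg_right (le_max_right _ _) (le_of_lt hl0)

end
end
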